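/- Let μ be a random measure on [0,∞) that is positive almost surely, and conditional on μ let N be a Poisson point process with mean measure μ. Write N̂_t = N[0,t] and μ̂_t = μ([0,t]). If μ̂_t → ∞ almost surely and lim_{t→∞} μ̂_{t+1}/μ̂_t = 1 almost surely, then N̂_t / μ̂_t → 1 almost surely. -/

import Mathlib

open MeasureTheory ProbabilityTheory Filter
open scoped ENNReal

open Real Set
open scoped NNReal Nat


lemma pois_sum (r : ℝ≥0) : HasSum (fun n : ℕ => poissonPMFReal r n) 1 := poissonPMFRealSum r

lemma pois_mean (r : ℝ≥0) : HasSum (fun n : ℕ => (n : ℝ) * poissonPMFReal r n) r := by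
  have h : ∀ n : ℕ, ((n+1 : ℕ) : ℝ) * poissonPMFReal r (n+1) = r * poissonPMFReal r n := by
    intro n
    simp only [poissonPMFReal, Nat.factorial_succ, pow_succ]
    push_cast
    field_simp
  have h2 : HasSum (fun n => ((n+1 : ℕ) : ℝ) * poissonPMFReal r (n+1)) r := by
    simp only [h]
    simpa using (pois_sum r).mul_left (r : ℝ)
  have := (hasSum_nat_add_iff (f := fun n : ℕ => (n : ℝ) * poissonPMFReal r n) 1).mp (by simpa using h2)
  simpa using this

lemma pois_fact2 (r : ℝ≥0) :
    HasSum (fun n : ℕ => (n : ℝ) * ((n : ℝ) - 1) * poissonPMFReal r n) (r^2) := by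
  have h : ∀ n : ℕ, ((n+2 : ℕ) : ℝ) * (((n+2 : ℕ) : ℝ) - 1) * poissonPMFReal r (n+2)
      = r^2 * poissonPMFReal r n := by
    intro n
    simp only [poissonPMFReal, Nat.factorial_succ, pow_succ]
    push_cast
    field_simp
    ring
  have h2 : HasSum (fun n => ((n+2 : ℕ) : ℝ) * (((n+2 : ℕ) : ℝ) - 1) * poissonPMFReal r (n+2)) (r^2) := by
    simp only [h]
    simpa using (pois_sum r).mul_left ((r : ℝ)^2)
  have := (hasSum_nat_add_iff
    (f := fun n : ℕ => (n : ℝ) * ((n : ℝ) - 1) * poissonPMFReal r n) 2).mp (by simpa using h2)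
  have e0 : ∑ n ∈ Finset.range 2, (n : ℝ) * ((n : ℝ) - 1) * poissonPMFReal r n = 0 := by
    simp [Finset.sum_range_succ]
  rw [e0, add_zero] at this
  exact this

lemma pois_var (r : ℝ≥0) :
    HasSum (fun n : ℕ => ((n : ℝ) - r)^2 * poissonPMFReal r n) r := by
  have key : ∀ n : ℕ, ((n : ℝ) - r)^2 * poissonPMFReal r n
      = (n : ℝ) * ((n : ℝ) - 1) * poissonPMFReal r n
        + (1 - 2*r) * ((n : ℝ) * poissonPMFReal r n) + r^2 * poissonPMFReal r n := by
    intro n; ring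
  have h := ((pois_fact2 r).add ((pois_mean r).mul_left (1 - 2*(r:ℝ)))).add
    ((pois_sum r).mul_left ((r:ℝ)^2))
  simp only [← key] at h
  convert h using 1
  ring

lemma pois_cheb (r : ℝ≥0) {c : ℝ} (hc : 0 < c) :
    poissonMeasure r {n : ℕ | c ≤ |(n : ℝ) - r|} ≤ ENNReal.ofReal (r / c^2) := by
  have hmeas : MeasurableSet {n : ℕ | c ≤ |(n : ℝ) - r|} := MeasurableSet.of_discrete
  have hrepr : poissonMeasure r {n : ℕ | c ≤ |(n : ℝ) - r|}
      = ∑' n, Set.indicator {n : ℕ | c ≤ |(n : ℝ) - r|} (poissonPMF r) n := by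
    rw [poissonMeasure, Measure.sum_apply _ hmeas]
    congr 1; ext n
    rw [Measure.smul_apply, Measure.dirac_apply' _ hmeas, smul_eq_mul]
    by_cases hn : n ∈ {n : ℕ | c ≤ |(n : ℝ) - r|}
    · rw [Set.indicator_of_mem hn, Set.indicator_of_mem hn, ← poissonPMFReal_ofReal_eq_poissonPMF]
      simp [poissonPMFReal]
    · rw [Set.indicator_of_notMem hn, Set.indicator_of_notMem hn, mul_zero]
  rw [hrepr]
  have hsum : Summable (fun n : ℕ => ((n : ℝ) - r)^2 * poissonPMFReal r n / c^2) :=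
    ((pois_var r).summable).div_const _
  have hb : ∀ n : ℕ, Set.indicator {n : ℕ | c ≤ |(n : ℝ) - r|} (poissonPMF r) n
      ≤ ENNReal.ofReal (((n : ℝ) - r)^2 * poissonPMFReal r n / c^2) := by
    intro n
    by_cases hn : n ∈ {n : ℕ | c ≤ |(n : ℝ) - r|}
    · rw [Set.indicator_of_mem hn]
      show ENNReal.ofReal (poissonPMFReal r n) ≤ _
      apply ENNReal.ofReal_le_ofReal
      have h1 : c^2 ≤ ((n : ℝ) - r)^2 := by
        rw [← sq_abs ((n : ℝ) - r)]
        exact pow_le_pow_left₀ hc.le hn 2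
      have h2 : 0 ≤ poissonPMFReal r n := poissonPMFReal_nonneg
      rw [le_div_iff₀ (by positivity)]
      nlinarith
    · rw [Set.indicator_of_notMem hn]; exact zero_le
  calc ∑' n, Set.indicator {n : ℕ | c ≤ |(n : ℝ) - r|} (poissonPMF r) n
      ≤ ∑' n : ℕ, ENNReal.ofReal (((n : ℝ) - r)^2 * poissonPMFReal r n / c^2) :=
        ENNReal.tsum_le_tsum hb
    _ = ENNReal.ofReal (∑' n : ℕ, ((n : ℝ) - r)^2 * poissonPMFReal r n / c^2) :=
        (ENNReal.ofReal_tsum_of_nonneg (fun n => by have := poissonPMFReal_nonneg (r := r) (n := n); positivity) hsum).symm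
    _ = ENNReal.ofReal (r / c^2) := by
        congr 1
        rw [tsum_div_const, (pois_var r).tsum_eq]


lemma event_bound {P : Measure (Measure ℝ)} {A : Set ℝ} (hA : MeasurableSet A) (r : ℝ≥0)
    (hlaw : Measure.map (fun ν : Measure ℝ => ν A) P
      = Measure.map (fun n : ℕ => (n : ℝ≥0∞)) (poissonMeasure r)) {c : ℝ} (hc : 0 < c) :
    P {ν : Measure ℝ | ν A = ⊤ ∨ c ≤ |(ν A).toReal - r|} ≤ ENNReal.ofReal (r / c^2) := by
  set S : Set ℝ≥0∞ := {x | x = ⊤ ∨ c ≤ |x.toReal - r|} with hS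
  have hSm : MeasurableSet S := by
    refine MeasurableSet.union (measurableSet_singleton ⊤) ?_
    exact measurableSet_le measurable_const
      ((ENNReal.measurable_toReal.sub measurable_const).abs)
  have h1 : {ν : Measure ℝ | ν A = ⊤ ∨ c ≤ |(ν A).toReal - r|}
      = (fun ν : Measure ℝ => ν A) ⁻¹' S := rfl
  rw [h1, ← Measure.map_apply (Measure.measurable_coe hA) hSm, hlaw,
    Measure.map_apply (by exact measurable_of_countable _) hSm]
  have h2 : (fun n : ℕ => (n : ℝ≥0∞)) ⁻¹' S = {n : ℕ | c ≤ |(n : ℝ) - r|} := by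
    ext n
    simp [hS, ENNReal.natCast_ne_top]
  rw [h2]
  exact pois_cheb r hc

set_option maxHeartbeats 1000000 in
lemma per_delta (m : Measure ℝ) (P : Measure (Measure ℝ)) [IsProbabilityMeasure P]
    (hlaw : ∀ A : Set ℝ, MeasurableSet A → m A ≠ ⊤ →
      Measure.map (fun ν : Measure ℝ => ν A) P
        = Measure.map (fun n : ℕ => (n : ℝ≥0∞)) (poissonMeasure (m A).toNNReal))
    (hfin : ∀ t : ℝ, m (Set.Icc 0 t) ≠ ⊤)
    (hFtop : Tendsto (fun t : ℝ => (m (Set.Icc 0 t)).toReal) atTop atTop)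
    {δ : ℝ} (hδ0 : 0 < δ) (hδ1 : δ ≤ 1)
    (hFr : ∀ᶠ t : ℝ in atTop,
      (m (Set.Icc 0 (t+1))).toReal ≤ (1+δ) * (m (Set.Icc 0 t)).toReal) :
    ∀ᵐ ν ∂P, ∀ᶠ n : ℕ in atTop, ν (Set.Icc 0 (n:ℝ)) ≠ ⊤ ∧
      |(ν (Set.Icc 0 (n:ℝ))).toReal / (m (Set.Icc 0 (n:ℝ))).toReal - 1| ≤ 8*δ := by
  set F : ℝ → ℝ := fun t => (m (Set.Icc 0 t)).toReal with hF
  have Fmono : Monotone F := fun s t h =>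
    ENNReal.toReal_mono (hfin t) (measure_mono (Set.Icc_subset_Icc_right h))
  set θ : ℝ := 1 + δ with hθ
  have hθ1 : 1 < θ := by simp [hθ, hδ0]
  have hθ0 : 0 < θ := by linarith
  -- the subsequence
  have hne : ∀ k : ℕ, {i : ℕ | θ^k ≤ F i}.Nonempty := by
    intro k
    have := (hFtop.comp tendsto_natCast_atTop_atTop (α := ℕ)).eventually_ge_atTop (θ^k)
    exact this.exists
  set nk : ℕ → ℕ := fun k => sInf {i : ℕ | θ^k ≤ F i} with hnk
  have hFnk : ∀ k, θ^k ≤ F (nk k) := fun k => Nat.sInf_mem (hne k)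
  have hFnkpos : ∀ k, 0 < F (nk k) := fun k => lt_of_lt_of_le (pow_pos hθ0 k) (hFnk k)
  have hnkmono : Monotone nk := by
    apply monotone_nat_of_le_succ
    intro k
    apply Nat.sInf_le
    exact le_trans (pow_le_pow_right₀ hθ1.le (Nat.le_succ k)) (hFnk (k+1))
  have hnktop : Tendsto nk atTop atTop := by
    rw [tendsto_atTop]
    intro b
    have h2 := (tendsto_pow_atTop_atTop_of_one_lt hθ1).eventually_gt_atTop (F b)
    filter_upwards [h2] with k hk
    by_contra hb
    push_neg at hb
    exact absurd (le_trans (hFnk k) (Fmono (by exact_mod_cast hb.le))) (not_le.mpr hk)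
  have hupper : ∀ᶠ k : ℕ in atTop, F (nk k) ≤ θ^(k+1) := by
    obtain ⟨T, hT⟩ := hFr.exists_forall_of_atTop
    have hev : ∀ᶠ k : ℕ in atTop, (⌈T⌉₊ + 1 : ℕ) ≤ nk k := hnktop.eventually_ge_atTop _
    filter_upwards [hev] with k hk
    have h1 : 1 ≤ nk k := le_trans (Nat.le_add_left 1 _) hk
    obtain ⟨i, hi⟩ : ∃ i, nk k = i + 1 := ⟨nk k - 1, by omega⟩
    have hnot : ¬ θ^k ≤ F (i : ℕ) := Nat.notMem_of_lt_sInf (show i < nk k by omega)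
    push_neg at hnot
    have hc : ((nk k : ℕ) : ℝ) = ((i : ℝ) + 1) := by rw [hi]; push_cast; ring
    have hT' : T ≤ (i : ℝ) := by
      refine le_trans (Nat.le_ceil T) ?_
      exact_mod_cast show (⌈T⌉₊ : ℕ) ≤ i by omega
    calc F (nk k) = F ((i : ℝ) + 1) := by rw [hc]
      _ ≤ θ * F (i : ℕ) := hT _ hT'
      _ ≤ θ * θ^k := by nlinarith [hnot.le]
      _ = θ^(k+1) := by ring
  -- Borel-Cantelli
  set E : ℕ → Set (Measure ℝ) := fun k =>
    {ν : Measure ℝ | ν (Set.Icc 0 ((nk k : ℕ) : ℝ)) = ⊤ ∨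
      δ * F (nk k) ≤ |(ν (Set.Icc 0 ((nk k : ℕ) : ℝ))).toReal - F (nk k)|} with hE
  have hEbd : ∀ k, P (E k) ≤ ENNReal.ofReal (δ⁻¹^2 * (θ⁻¹)^k) := by
    intro k
    have hr : ((m (Set.Icc 0 ((nk k : ℕ) : ℝ))).toNNReal : ℝ) = F (nk k) := rfl
    have hb := event_bound (A := Set.Icc 0 ((nk k : ℕ) : ℝ)) measurableSet_Icc _
      (hlaw _ measurableSet_Icc (hfin _)) (c := δ * F (nk k))
      (mul_pos hδ0 (hFnkpos k))
    rw [hr] at hb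
    refine le_trans hb (ENNReal.ofReal_le_ofReal ?_)
    have hFne : F (nk k) ≠ 0 := (hFnkpos k).ne'
    have hδne : δ ≠ 0 := hδ0.ne'
    have h1 : F (nk k) / (δ * F (nk k))^2 = δ⁻¹^2 / F (nk k) := by
      field_simp
    rw [h1]
    rw [div_le_iff₀ (hFnkpos k)] at *
    calc δ⁻¹^2 ≤ δ⁻¹^2 * ((θ⁻¹)^k * θ^k) := by
            rw [← mul_pow, inv_mul_cancel₀ (ne_of_gt hθ0), one_pow, mul_one]
      _ ≤ δ⁻¹^2 * (θ⁻¹)^k * F (nk k) := by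
            rw [mul_assoc]
            refine mul_le_mul_of_nonneg_left ?_ (by positivity)
            exact mul_le_mul_of_nonneg_left (hFnk k) (by positivity)
  have hsum : ∑' k, P (E k) ≠ ⊤ := by
    refine ne_top_of_le_ne_top ?_ (ENNReal.tsum_le_tsum hEbd)
    have h1 : ∀ k : ℕ, ENNReal.ofReal (δ⁻¹^2 * (θ⁻¹)^k)
        = (ENNReal.ofReal δ⁻¹)^2 * (ENNReal.ofReal θ⁻¹)^k := by
      intro k
      rw [ENNReal.ofReal_mul (by positivity), ENNReal.ofReal_pow (by positivity),
        ENNReal.ofReal_pow (by positivity)]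
    simp_rw [h1]
    rw [ENNReal.tsum_mul_left, ENNReal.tsum_geometric]
    apply ENNReal.mul_ne_top (by simp [ENNReal.pow_ne_top])
    rw [ENNReal.inv_ne_top]
    rw [ne_eq, tsub_eq_zero_iff_le, not_le]
    exact ENNReal.ofReal_lt_one.2 (inv_lt_one_of_one_lt₀ hθ1)
  have hBC := measure_limsup_atTop_eq_zero hsum
  have hae : ∀ᵐ ν ∂P, ∀ᶠ k : ℕ in atTop, ν (Set.Icc 0 ((nk k : ℕ) : ℝ)) ≠ ⊤ ∧
      |(ν (Set.Icc 0 ((nk k : ℕ) : ℝ))).toReal - F (nk k)| < δ * F (nk k) := by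
    have : ∀ᵐ ν ∂P, ν ∉ limsup E atTop := by
      rw [ae_iff]
      simpa using hBC
    filter_upwards [this] with ν hν
    rw [mem_limsup_iff_frequently_mem, not_frequently] at hν
    filter_upwards [hν] with k hk
    rw [hE] at hk
    simp only [Set.mem_setOf_eq, not_or, not_le] at hk
    exact hk
  -- deterministic finish
  filter_upwards [hae] with ν hν
  obtain ⟨K0, hK0⟩ := eventually_atTop.mp (hν.and hupper)
  have hfinν : ∀ n : ℕ, ν (Set.Icc 0 (n:ℝ)) ≠ ⊤ := by
    intro n
    obtain ⟨k, hk1, hk2⟩ := (hnktop.eventually_ge_atTop n).and (eventually_ge_atTop K0)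
      |>.exists
    exact fun h => (hK0 k hk2).1.1 (eq_top_mono (measure_mono
      (Set.Icc_subset_Icc_right (by exact_mod_cast hk1))) h)
  set X : ℕ → ℝ := fun n => (ν (Set.Icc 0 (n:ℝ))).toReal with hX
  have hXmono : Monotone X := fun a b h => ENNReal.toReal_mono (hfinν b)
    (measure_mono (Set.Icc_subset_Icc_right (by exact_mod_cast h)))
  have hXnonneg : ∀ n, 0 ≤ X n := fun n => ENNReal.toReal_nonneg
  -- eventually: n ≥ nk K0
  have hev : ∀ᶠ n : ℕ in atTop, nk K0 ≤ n := eventually_ge_atTop _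
  filter_upwards [hev] with n hn
  refine ⟨hfinν n, ?_⟩
  show |X n / F (n : ℕ) - 1| ≤ 8*δ
  -- the maximal index k with nk k ≤ n
  have hbdd : BddAbove {k : ℕ | nk k ≤ n} := by
    obtain ⟨B, hB⟩ := eventually_atTop.mp (hnktop.eventually_gt_atTop n)
    exact ⟨B, fun k hk => by
      by_contra hkB
      exact absurd hk (not_le.mpr (hB k (le_of_not_ge hkB)))⟩
  have hne2 : {k : ℕ | nk k ≤ n}.Nonempty := ⟨K0, hn⟩
  set k : ℕ := sSup {k : ℕ | nk k ≤ n} with hk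
  have hkmem : nk k ≤ n := Nat.sSup_mem hne2 hbdd
  have hkK0 : K0 ≤ k := le_csSup hbdd hn
  have hknot : ¬ nk (k+1) ≤ n := fun h => by
    have := le_csSup hbdd h
    omega
  push_neg at hknot
  have hA := hK0 k hkK0
  have hB := hK0 (k+1) (by omega)
  -- bounds
  have hFn_lb : θ^k ≤ F n := le_trans (hFnk k)
    (Fmono (by exact_mod_cast hkmem : (nk k : ℝ) ≤ (n : ℝ)))
  have hFn_ub : F n ≤ θ^(k+2) :=
    le_trans (Fmono (by exact_mod_cast hknot.le : (n : ℝ) ≤ ((nk (k+1) : ℕ) : ℝ))) hB.2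
  have hFnpos : 0 < F n := lt_of_lt_of_le (pow_pos hθ0 k) hFn_lb
  have habs1 := abs_lt.mp hA.1.2
  have habs2 := abs_lt.mp hB.1.2
  have hX_ub : X n ≤ θ^(k+3) := by
    have h1 : X n ≤ X (nk (k+1)) := hXmono hknot.le
    have h2 : X (nk (k+1)) < (1+δ) * F (nk (k+1)) := by nlinarith [habs2.2]
    have h3 : F (nk (k+1)) ≤ θ^(k+2) := hB.2
    calc X n ≤ (1+δ) * F (nk (k+1)) := le_trans h1 h2.le
      _ ≤ θ * θ^(k+2) := by rw [hθ]; nlinarith [hFnkpos (k+1)]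
      _ = θ^(k+3) := by ring
  have hX_lb : (1-δ) * θ^k ≤ X n := by
    have h1 : X (nk k) ≤ X n := hXmono hkmem
    have h2 : (1-δ) * F (nk k) < X (nk k) := by nlinarith [habs1.1]
    have h3 : θ^k ≤ F (nk k) := hFnk k
    nlinarith [pow_pos hθ0 k]
  have hXn := hXnonneg n
  clear hXmono hXnonneg hfinν hν hK0 hA hB habs1 habs2 hkmem hknot hkK0 hbdd hne2 hk
  clear hFnk hFnkpos hnkmono hnktop hupper hEbd hsum hBC hae hne hFr hFtop Fmono hlaw hfin
  clear_value k X E nk F θ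
  rw [abs_le]
  constructor
  · have hkey : (1 - 8*δ) * F n ≤ X n := by
      rcases le_or_gt (1 - 8*δ) 0 with h | h
      · exact le_trans (mul_nonpos_of_nonpos_of_nonneg h hFnpos.le) hXn
      · have hsq : (1 - 8*δ) * θ^2 ≤ 1 - δ := by rw [hθ]; nlinarith [mul_pos hδ0 hδ0, mul_pos (mul_pos hδ0 hδ0) hδ0]
        calc (1 - 8*δ) * F n ≤ (1 - 8*δ) * θ^(k+2) := mul_le_mul_of_nonneg_left hFn_ub h.le
          _ = ((1 - 8*δ) * θ^2) * θ^k := by ring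
          _ ≤ (1 - δ) * θ^k := mul_le_mul_of_nonneg_right hsq (pow_pos hθ0 k).le
          _ ≤ X n := hX_lb
    have h2 : 1 - 8*δ ≤ X n / F n := (le_div_iff₀ hFnpos).mpr hkey
    linarith
  · have hcube : θ^3 ≤ 1 + 8*δ := by rw [hθ]; nlinarith [mul_pos hδ0 hδ0, mul_pos (mul_pos hδ0 hδ0) hδ0]
    have hkey : X n ≤ (1 + 8*δ) * F n := by
      calc X n ≤ θ^(k+3) := hX_ub
        _ = θ^3 * θ^k := by ring
        _ ≤ (1 + 8*δ) * θ^k := mul_le_mul_of_nonneg_right hcube (pow_pos hθ0 k).le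
        _ ≤ (1 + 8*δ) * F n := by nlinarith
    have h2 : X n / F n ≤ 1 + 8*δ := (div_le_iff₀ hFnpos).mpr (by linarith)
    linarith

lemma enn_div_toReal {x y : ℝ≥0∞} (hx : x ≠ ⊤) (hy0 : y ≠ 0) (hyt : y ≠ ⊤) :
    x / y = ENNReal.ofReal (x.toReal / y.toReal) := by
  rw [ENNReal.ofReal_div_of_pos (ENNReal.toReal_pos hy0 hyt), ENNReal.ofReal_toReal hx,
    ENNReal.ofReal_toReal hyt]

lemma core (m : Measure ℝ) (P : Measure (Measure ℝ)) [IsProbabilityMeasure P]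
    (hlaw : ∀ A : Set ℝ, MeasurableSet A → m A ≠ ⊤ →
      Measure.map (fun ν : Measure ℝ => ν A) P
        = Measure.map (fun n : ℕ => (n : ℝ≥0∞)) (poissonMeasure (m A).toNNReal))
    (hfin : ∀ t : ℝ, m (Set.Icc 0 t) ≠ ⊤)
    (hinf : Tendsto (fun t : ℝ => m (Set.Icc 0 t)) atTop (nhds ⊤))
    (hratio : Tendsto (fun t : ℝ => m (Set.Icc 0 (t+1)) / m (Set.Icc 0 t)) atTop (nhds 1)) :
    ∀ᵐ ν ∂P, Tendsto (fun n : ℕ => ν (Set.Icc 0 (n:ℝ)) / m (Set.Icc 0 (n:ℝ)))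
      atTop (nhds 1) := by
  have hFtop : Tendsto (fun t : ℝ => (m (Set.Icc 0 t)).toReal) atTop atTop := by
    rw [tendsto_atTop]
    intro b
    have h1 : ∀ᶠ t : ℝ in atTop, ENNReal.ofReal (max b 0) < m (Set.Icc 0 t) :=
      hinf.eventually (eventually_gt_nhds ENNReal.ofReal_lt_top)
    filter_upwards [h1] with t ht
    calc b ≤ max b 0 := le_max_left _ _
      _ = (ENNReal.ofReal (max b 0)).toReal := (ENNReal.toReal_ofReal (le_max_right _ _)).symm
      _ ≤ _ := ENNReal.toReal_mono (hfin t) ht.le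
  have hone : ∀ᶠ t : ℝ in atTop, 1 ≤ m (Set.Icc 0 t) :=
    hinf.eventually (eventually_ge_nhds (by simp : (1:ℝ≥0∞) < ⊤))
  have hFr : ∀ δ : ℝ, 0 < δ → ∀ᶠ t : ℝ in atTop,
      (m (Set.Icc 0 (t+1))).toReal ≤ (1+δ) * (m (Set.Icc 0 t)).toReal := by
    intro δ hδ
    have hlt : (1:ℝ≥0∞) < 1 + ENNReal.ofReal δ :=
      ENNReal.lt_add_right ENNReal.one_ne_top (by simpa using hδ)
    have h2 : ∀ᶠ t : ℝ in atTop, m (Set.Icc 0 (t+1)) / m (Set.Icc 0 t) < 1 + ENNReal.ofReal δ :=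
      hratio.eventually (eventually_lt_nhds hlt)
    filter_upwards [h2, hone] with t h2t h1t
    have hy0 : m (Set.Icc 0 t) ≠ 0 := fun h => by simp [h] at h1t
    have hmul : m (Set.Icc 0 (t+1)) < (1 + ENNReal.ofReal δ) * m (Set.Icc 0 t) :=
      (ENNReal.div_lt_iff (Or.inl hy0) (Or.inl (hfin t))).mp h2t
    have := ENNReal.toReal_mono (a := m (Set.Icc 0 (t+1)))
      (ENNReal.mul_ne_top (by simp) (hfin t)) hmul.le
    rw [ENNReal.toReal_mul] at this
    refine le_trans this ?_
    rw [ENNReal.toReal_add ENNReal.one_ne_top ENNReal.ofReal_ne_top, ENNReal.toReal_one,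
      ENNReal.toReal_ofReal hδ.le]
  have H : ∀ j : ℕ, ∀ᵐ ν ∂P, ∀ᶠ n : ℕ in atTop, ν (Set.Icc 0 (n:ℝ)) ≠ ⊤ ∧
      |(ν (Set.Icc 0 (n:ℝ))).toReal / (m (Set.Icc 0 (n:ℝ))).toReal - 1| ≤ 8*(1/(j+1) : ℝ) := by
    intro j
    have hδ0 : (0:ℝ) < 1/(j+1) := by positivity
    have hδ1 : (1/(j+1) : ℝ) ≤ 1 := by
      rw [div_le_one (by positivity)]
      simp
    exact per_delta m P hlaw hfin hFtop hδ0 hδ1 (hFr _ hδ0)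
  rw [← ae_all_iff] at H
  have honeN : ∀ᶠ n : ℕ in atTop, 1 ≤ m (Set.Icc 0 (n:ℝ)) :=
    tendsto_natCast_atTop_atTop.eventually hone
  filter_upwards [H] with ν hν
  have hreal : Tendsto
      (fun n : ℕ => (ν (Set.Icc 0 (n:ℝ))).toReal / (m (Set.Icc 0 (n:ℝ))).toReal)
      atTop (nhds 1) := by
    rw [Metric.tendsto_atTop]
    intro ε hε
    obtain ⟨j, hj⟩ := exists_nat_one_div_lt (show (0:ℝ) < ε/8 by positivity)
    obtain ⟨N, hN⟩ := eventually_atTop.mp (hν j)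
    refine ⟨N, fun n hn => ?_⟩
    rw [Real.dist_eq]
    calc |_ - 1| ≤ 8*(1/(j+1) : ℝ) := (hN n hn).2
      _ < 8 * (ε/8) := by
          refine (mul_lt_mul_iff_right₀ (by norm_num)).mpr ?_
          exact_mod_cast hj
      _ = ε := by ring
  have := ENNReal.tendsto_ofReal hreal
  rw [ENNReal.ofReal_one] at this
  refine Tendsto.congr' ?_ this
  filter_upwards [hν 0, honeN] with n hn h1n
  have hy0 : m (Set.Icc 0 (n:ℝ)) ≠ 0 := fun h => by simp [h] at h1n
  rw [enn_div_toReal hn.1 hy0 (hfin _)]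

lemma enn_chain {x z y : ℝ≥0∞} (hz0 : z ≠ 0) (hzt : z ≠ ⊤) : x / y = x / z * (z / y) := by
  rw [div_eq_mul_inv, div_eq_mul_inv, div_eq_mul_inv, mul_assoc, ← mul_assoc (z⁻¹),
    ENNReal.inv_mul_cancel hz0 hzt, one_mul]

lemma recover (μ ν : Measure ℝ)
    (h1 : Tendsto (fun n : ℕ => ν (Set.Icc 0 (n:ℝ)) / μ (Set.Icc 0 (n:ℝ))) atTop (nhds 1))
    (h2 : Tendsto (fun n : ℕ => μ (Set.Icc 0 ((n:ℝ)+1)) / μ (Set.Icc 0 (n:ℝ))) atTop (nhds 1))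
    (h3 : Tendsto (fun n : ℕ => μ (Set.Icc 0 (n:ℝ))) atTop (nhds ⊤)) :
    Tendsto (fun t : ℝ => ν (Set.Icc 0 t) / μ (Set.Icc 0 t)) atTop (nhds 1) := by
  set a : ℕ → ℝ≥0∞ := fun n => μ (Set.Icc 0 (n:ℝ)) with ha
  set b : ℕ → ℝ≥0∞ := fun n => ν (Set.Icc 0 (n:ℝ)) with hb
  have hcast : ∀ n : ℕ, ((n+1 : ℕ) : ℝ) = (n:ℝ)+1 := fun n => by push_cast; ring
  have hamono : ∀ n : ℕ, a n ≤ a (n+1) := fun n =>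
    measure_mono (Set.Icc_subset_Icc_right (by rw [hcast]; linarith))
  have h2' : Tendsto (fun n : ℕ => a (n+1) / a n) atTop (nhds 1) := by
    refine h2.congr fun n => ?_
    rw [ha]
    simp only [hcast]
  have hfin : ∀ n : ℕ, a n ≠ ⊤ := by
    intro n hn
    have hev : ∀ᶠ k : ℕ in atTop, a (k+1) / a k = 0 := by
      filter_upwards [eventually_ge_atTop n] with k hk
      have hak : a k = ⊤ := eq_top_mono (measure_mono
        (Set.Icc_subset_Icc_right (by exact_mod_cast hk))) hn
      rw [hak, ENNReal.div_top]
    have hpos := h2'.eventually (eventually_gt_nhds (by simp : (0:ℝ≥0∞) < 1))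
    obtain ⟨k, hk1, hk2⟩ := (hev.and hpos).exists
    rw [hk1] at hk2
    exact lt_irrefl _ hk2
  have hone : ∀ᶠ n : ℕ in atTop, 1 ≤ a n :=
    h3.eventually (eventually_ge_nhds (by simp : (1:ℝ≥0∞) < ⊤))
  -- upper and lower comparison sequences
  have h1' : Tendsto (fun n : ℕ => b (n+1) / a (n+1)) atTop (nhds 1) :=
    h1.comp (tendsto_add_atTop_nat 1)
  have hU : Tendsto (fun n : ℕ => b (n+1) / a (n+1) * (a (n+1) / a n)) atTop (nhds 1) := by
    have := ENNReal.Tendsto.mul h1' (Or.inr ENNReal.one_ne_top) h2' (Or.inl one_ne_zero)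
    simpa using this
  have hinv : Tendsto (fun n : ℕ => a n / a (n+1)) atTop (nhds 1) := by
    have hi : Tendsto (fun n : ℕ => (a (n+1) / a n)⁻¹) atTop (nhds 1) := by
      rw [show (1:ℝ≥0∞) = 1⁻¹ by simp]
      exact ENNReal.tendsto_inv_iff.2 h2'
    refine hi.congr' ?_
    filter_upwards [hone] with n hn
    rw [ENNReal.inv_div (Or.inl (hfin n)) (Or.inl (by intro h; rw [h] at hn; simp at hn))]
  have hL : Tendsto (fun n : ℕ => b n / a n * (a n / a (n+1))) atTop (nhds 1) := by
    have := ENNReal.Tendsto.mul h1 (Or.inr ENNReal.one_ne_top) hinv (Or.inl one_ne_zero)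
    simpa using this
  -- squeeze
  have hfloor : Tendsto (fun t : ℝ => ⌊t⌋₊) atTop atTop := tendsto_nat_floor_atTop
  refine tendsto_of_tendsto_of_tendsto_of_le_of_le' (hL.comp hfloor) (hU.comp hfloor) ?_ ?_
  · obtain ⟨N, hN⟩ := eventually_atTop.mp hone
    filter_upwards [hfloor.eventually_ge_atTop N, eventually_ge_atTop (0:ℝ)] with t hNt h0t
    set n : ℕ := ⌊t⌋₊ with hn
    have hone_n : 1 ≤ a n := hN n hNt
    have han0 : a n ≠ 0 := fun h => by rw [h] at hone_n; simp at hone_n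
    have hlow : b n ≤ ν (Set.Icc 0 t) := measure_mono
      (Set.Icc_subset_Icc_right (Nat.floor_le h0t))
    have hhigh : μ (Set.Icc 0 t) ≤ a (n+1) := measure_mono
      (Set.Icc_subset_Icc_right (by rw [hcast]; exact (Nat.lt_floor_add_one t).le))
    show b n / a n * (a n / a (n+1)) ≤ _
    rw [← enn_chain han0 (hfin n)]
    exact ENNReal.div_le_div hlow hhigh
  · obtain ⟨N, hN⟩ := eventually_atTop.mp hone
    filter_upwards [hfloor.eventually_ge_atTop N, eventually_ge_atTop (0:ℝ)] with t hNt h0t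
    set n : ℕ := ⌊t⌋₊ with hn
    have hone_n : 1 ≤ a (n+1) := le_trans (hN n hNt) (hamono n)
    have han0 : a (n+1) ≠ 0 := fun h => by rw [h] at hone_n; simp at hone_n
    have hlow : a n ≤ μ (Set.Icc 0 t) := measure_mono
      (Set.Icc_subset_Icc_right (Nat.floor_le h0t))
    have hhigh : ν (Set.Icc 0 t) ≤ b (n+1) := measure_mono
      (Set.Icc_subset_Icc_right (by rw [hcast]; exact (Nat.lt_floor_add_one t).le))
    show _ ≤ b (n+1) / a (n+1) * (a (n+1) / a n)
    rw [← enn_chain han0 (hfin (n+1))]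
    exact ENNReal.div_le_div hhigh hlow

/-- `N` is a Poisson point process (point random measure) on `S` under `P` with mean
measure `μ`: for every measurable set `A` of finite mean measure, `N(A)` is
Poisson-distributed with mean `μ A`, and the counts of finitely many pairwise disjoint
measurable sets are independent. -/
def IsPoissonPP {Ω S : Type*} [MeasurableSpace Ω] [MeasurableSpace S]
    (N : Ω → Measure S) (P : Measure Ω) (μ : Measure S) : Prop :=
  Measurable N ∧
  (∀ A : Set S, MeasurableSet A → μ A ≠ ⊤ →
    Measure.map (fun ω => N ω A) P
      = Measure.map (fun n : ℕ => (n : ℝ≥0∞)) (poissonMeasure (μ A).toNNReal)) ∧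
  (∀ (n : ℕ) (A : Fin n → Set S), (∀ i, MeasurableSet (A i)) →
    Pairwise (Function.onFun Disjoint A) →
    iIndepFun (fun i ω => N ω (A i)) P)

/-- Law of large numbers for doubly stochastic (Cox) processes: let `μ` be a random
measure on `[0, ∞)`, positive almost surely, with law `Q`, and conditional on `μ` let `N`
be a Poisson point process with mean measure `μ` (conditional law given by the Markov
kernel `κ`).  If `μ̂ t = μ [0, t] → ∞` a.s. and `μ̂ (t+1) / μ̂ t → 1` a.s., then
`N̂ t / μ̂ t = N [0, t] / μ [0, t] → 1` almost surely (under the joint law `Q ⊗ₘ κ`). -/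
theorem stmt17 (Q : Measure (Measure ℝ)) [IsProbabilityMeasure Q]
    (κ : Kernel (Measure ℝ) (Measure ℝ)) [IsMarkovKernel κ]
    (hPP : ∀ᵐ m ∂Q, IsPoissonPP (fun ν : Measure ℝ => ν) (κ m) m)
    (hpos : ∀ᵐ m ∂Q, m ≠ 0)
    (hsupp : ∀ᵐ m ∂Q, m (Set.Iio 0) = 0)
    (hinf : ∀ᵐ m ∂Q, Tendsto (fun t : ℝ => m (Set.Icc 0 t)) atTop (nhds ⊤))
    (hratio : ∀ᵐ m ∂Q,
      Tendsto (fun t : ℝ => m (Set.Icc 0 (t + 1)) / m (Set.Icc 0 t)) atTop (nhds 1)) :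
    ∀ᵐ p ∂(Q ⊗ₘ κ),
      Tendsto (fun t : ℝ => p.2 (Set.Icc 0 t) / p.1 (Set.Icc 0 t)) atTop (nhds 1) := by
  set Pp : Measure ℝ × Measure ℝ → Prop := fun p =>
    Tendsto (fun n : ℕ => p.2 (Set.Icc 0 (n:ℝ)) / p.1 (Set.Icc 0 (n:ℝ))) atTop (nhds 1) ∧
    Tendsto (fun n : ℕ => p.1 (Set.Icc 0 ((n:ℝ)+1)) / p.1 (Set.Icc 0 (n:ℝ))) atTop (nhds 1) ∧
    Tendsto (fun n : ℕ => p.1 (Set.Icc 0 (n:ℝ))) atTop (nhds ⊤) with hPp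
  have hmeas : MeasurableSet {p : Measure ℝ × Measure ℝ | Pp p} := by
    rw [hPp]
    simp only [Set.setOf_and]
    refine MeasurableSet.inter ?_ (MeasurableSet.inter ?_ ?_)
    · exact measurableSet_tendsto (nhds 1) fun n =>
        ((Measure.measurable_coe measurableSet_Icc).comp measurable_snd).div
        ((Measure.measurable_coe measurableSet_Icc).comp measurable_fst)
    · exact measurableSet_tendsto (nhds 1) fun n =>
        ((Measure.measurable_coe measurableSet_Icc).comp measurable_fst).div
        ((Measure.measurable_coe measurableSet_Icc).comp measurable_fst)
    · exact measurableSet_tendsto (nhds ⊤) fun n =>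
        (Measure.measurable_coe measurableSet_Icc).comp measurable_fst
  have hae : ∀ᵐ m ∂Q, ∀ᵐ ν ∂κ m, Pp (m, ν) := by
    filter_upwards [hPP, hinf, hratio] with m hPPm hinfm hratiom
    have hfin : ∀ t : ℝ, m (Set.Icc 0 t) ≠ ⊤ := by
      have h2 := hratiom.eventually (eventually_gt_nhds (by simp : (0:ℝ≥0∞) < 1))
      obtain ⟨T, hT⟩ := eventually_atTop.mp h2
      intro t ht
      have h3 : m (Set.Icc 0 (max t T)) = ⊤ := eq_top_mono
        (measure_mono (Set.Icc_subset_Icc_right (le_max_left t T))) ht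
      have h4 := hT (max t T) (le_max_right t T)
      rw [h3, ENNReal.div_top] at h4
      exact lt_irrefl _ h4
    have hcore := core m (κ m) hPPm.2.1 hfin hinfm hratiom
    filter_upwards [hcore] with ν hν
    exact ⟨hν, hratiom.comp tendsto_natCast_atTop_atTop,
      hinfm.comp tendsto_natCast_atTop_atTop⟩
  have hall := Measure.ae_compProd_of_ae_ae hmeas hae
  filter_upwards [hall] with p hp
  exact recover p.1 p.2 hp.1 hp.2.1 hp.2.2
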